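/- The quantity #STST(w) + #TSTS(w), counting subsequence occurrences, is invariant under cyclic rotation of the word w. -/

import Mathlib

inductive Letter | S | T
deriving DecidableEq, Repr

open Letter

/-- Number of occurrences of `u` as a (not necessarily contiguous) subsequence of `w`. -/
def cnt (u w : List Letter) : ℕ := w.sublists.count u

/-!
Appending a letter `a` to `t` creates, for a pattern `u = v ++ [a]`, exactly `#v(t)` new
occurrences (those using the new last letter); prepending `a` does the same for `u = a :: v`.
Rotating `a :: t` into `t ++ [a]` therefore trades, summed over a set `U` of patterns, the
contributions of the patterns `a :: v ∈ U` for those of their rotations `v ++ [a]`. If `U` is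
closed under rotation the two sums agree, and `{STST, TSTS}` is such a set.
-/

namespace List

variable {α : Type*}

theorem getLast?_rotate_one (u : List α) : (u.rotate 1).getLast? = u.head? := by
  cases u <;> simp

theorem dropLast_rotate_one (u : List α) : (u.rotate 1).dropLast = u.tail := by
  cases u <;> simp

variable [DecidableEq α]

theorem count_sublists_cons (a : α) (t u : List α) :
    (a :: t).sublists.count u =
      t.sublists.count u + if u.head? = some a then t.sublists.count u.tail else 0 := by
  rw [(sublists_cons_perm_append a t).count_eq, count_append]
  congr 1
  rcases u with _ | ⟨x, v⟩
  · simp [count_eq_zero]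
  · by_cases hx : x = a
    · subst hx
      simp [count_map_of_injective _ _ cons_injective]
    · simp [count_eq_zero, hx, Ne.symm hx]

theorem count_sublists_concat (a : α) (t u : List α) :
    (t ++ [a]).sublists.count u =
      t.sublists.count u + if u.getLast? = some a then t.sublists.count u.dropLast else 0 := by
  rw [sublists_concat, count_append]
  congr 1
  rcases u.eq_nil_or_concat with rfl | ⟨v, x, rfl⟩
  · simp [count_eq_zero]
  · by_cases hx : x = a
    · subst hx
      simp [count_map_of_injective _ _ (append_left_injective [x])]
    · simp [count_eq_zero, hx, Ne.symm hx]

theorem sum_count_sublists_rotate_one {U : Finset (List α)} (hU : ∀ u ∈ U, u.rotate 1 ∈ U)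
    (w : List α) :
    ∑ u ∈ U, (w.rotate 1).sublists.count u = ∑ u ∈ U, w.sublists.count u := by
  rcases w with _ | ⟨a, t⟩
  · rfl
  have hrot : U.image (·.rotate 1) = U :=
    Finset.eq_of_subset_of_card_le (Finset.image_subset_iff.2 hU)
      (Finset.card_image_of_injective U (rotate_injective 1)).ge
  rw [rotate_cons_succ, rotate_zero]
  simp only [count_sublists_cons, count_sublists_concat, Finset.sum_add_distrib]
  congr 1
  conv_lhs => rw [← hrot]
  rw [Finset.sum_image fun u _ v _ h => rotate_injective 1 h]
  simp only [getLast?_rotate_one, dropLast_rotate_one]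

end List

theorem stmt4 (w : List Letter) :
    cnt [S,T,S,T] (w.rotate 1) + cnt [T,S,T,S] (w.rotate 1)
      = cnt [S,T,S,T] w + cnt [T,S,T,S] w := by
  have hpair (v : List Letter) : cnt [S,T,S,T] v + cnt [T,S,T,S] v =
      ∑ u ∈ {[S,T,S,T], [T,S,T,S]}, cnt u v :=
    (Finset.sum_pair (f := (cnt · v)) (by decide : ([S,T,S,T] : List Letter) ≠ [T,S,T,S])).symm
  rw [hpair, hpair]
  exact List.sum_count_sublists_rotate_one (by decide) w
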